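/- arXiv:2508.00267 — 3 statements merged into one kernel-verified Lean document; each statement's English description precedes it below -/
import Mathlib

section
/- Let F : ℝ^d → ℝ be differentiable with ρ-Lipschitz gradient, i.e. ‖∇F(x) − ∇F(y)‖ ≤ ρ‖x − y‖ for all x, y. Then for every t ≥ 1, F(W̃_{t+1}) − F(W̃_1) ≤ Term1 + Term2 + Term3 + Term4. -/
noncomputable section
open Finset
open scoped RealInnerProductSpace

/-- Embed a coordinate function as a vector of `ℝ^d` (all vector operations in the paper
are componentwise). -/
def vec {d : ℕ} (f : Fin d → ℝ) : EuclideanSpace ℝ (Fin d) :=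
  (WithLp.equiv 2 (Fin d → ℝ)).symm f

lemma vec_apply {d : ℕ} (f : Fin d → ℝ) (j : Fin d) : vec f j = f j := rfl

lemma descent {E : Type*} [NormedAddCommGroup E] [InnerProductSpace ℝ E] [CompleteSpace E]
    {ρ : ℝ} (F : E → ℝ) (hF : Differentiable ℝ F)
    (hLip : ∀ x y, ‖gradient F x - gradient F y‖ ≤ ρ * ‖x - y‖) (x y : E) :
    F y - F x ≤ ⟪gradient F x, y - x⟫ + ρ / 2 * ‖y - x‖ ^ 2 := by
  set v := y - x with hv
  set g : ℝ → ℝ := fun s => F (x + s • v) - s * ⟪gradient F x, v⟫ - ρ / 2 * s ^ 2 * ‖v‖ ^ 2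
    with hg
  have hg' : ∀ s : ℝ, HasDerivAt g
      (⟪gradient F (x + s • v), v⟫ - ⟪gradient F x, v⟫ - ρ * s * ‖v‖ ^ 2) s := by
    intro s
    have hline : HasDerivAt (fun s : ℝ => x + s • v) v s := by
      simpa using ((hasDerivAt_id s).smul_const v).const_add x
    have hF' := ((hF (x + s • v)).hasGradientAt.hasFDerivAt).comp_hasDerivAt s hline
    simp only [InnerProductSpace.toDual_apply_apply] at hF'
    have h2 : HasDerivAt (fun s : ℝ => s * ⟪gradient F x, v⟫) ⟪gradient F x, v⟫ s := by
      simpa using (hasDerivAt_id s).mul_const ⟪gradient F x, v⟫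
    have h3 : HasDerivAt (fun s : ℝ => ρ / 2 * s ^ 2 * ‖v‖ ^ 2) (ρ * s * ‖v‖ ^ 2) s := by
      have := ((hasDerivAt_pow 2 s).const_mul (ρ / 2)).mul_const (‖v‖ ^ 2)
      exact this.congr_deriv (by ring)
    exact (hF'.sub h2).sub h3
  have hanti : AntitoneOn g (Set.Icc 0 1) := by
    apply antitoneOn_of_deriv_nonpos (convex_Icc 0 1)
    · exact fun s _ => (hg' s).differentiableAt.continuousAt.continuousWithinAt
    · intro s _
      exact (hg' s).differentiableAt.differentiableWithinAt
    · intro s hs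
      rw [interior_Icc] at hs
      rw [(hg' s).deriv]
      have h1 : ⟪gradient F (x + s • v) - gradient F x, v⟫ ≤ ρ * s * ‖v‖ ^ 2 := by
        calc ⟪gradient F (x + s • v) - gradient F x, v⟫
            ≤ ‖gradient F (x + s • v) - gradient F x‖ * ‖v‖ := real_inner_le_norm _ _
          _ ≤ ρ * ‖(x + s • v) - x‖ * ‖v‖ :=
              mul_le_mul_of_nonneg_right (hLip _ _) (norm_nonneg _)
          _ = ρ * s * ‖v‖ ^ 2 := by
              rw [add_sub_cancel_left, norm_smul, Real.norm_eq_abs,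
                abs_of_pos hs.1]; ring
      rw [inner_sub_left] at h1
      linarith
  have := hanti (Set.left_mem_Icc.mpr zero_le_one) (Set.right_mem_Icc.mpr zero_le_one)
    zero_le_one
  simp only [hg, one_smul, zero_smul, add_zero, one_pow, mul_one, zero_mul, sub_zero] at this
  have hxy : x + v = y := by rw [hv]; abel
  rw [hxy] at this
  nlinarith [this]

/-- If `F` is differentiable with `ρ`-Lipschitz gradient, then for every `t ≥ 1`,
`F(W̃ (t+1)) − F(W̃ 1) ≤ Term1 + Term2 + Term3 + Term4`. -/
theorem stmt2 {d : ℕ} (hd : 1 ≤ d) (α β₁ ρ : ℝ) (hα : 0 < α)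
    (hβ₁0 : 0 ≤ β₁) (hβ₁1 : β₁ < 1)
    (F : EuclideanSpace ℝ (Fin d) → ℝ)
    (hF : Differentiable ℝ F)
    (hLip : ∀ x y, ‖gradient F x - gradient F y‖ ≤ ρ * ‖x - y‖)
    (G M V W tW : ℕ → EuclideanSpace ℝ (Fin d))
    (hV : ∀ t, ∀ j : Fin d, 0 < V t j)
    (hM0 : M 0 = 0)
    (hM : ∀ t, 1 ≤ t → M t = β₁ • M (t - 1) + (1 - β₁) • G t)
    (hW1 : W 1 = W 0)
    (hW : ∀ t, 1 ≤ t → W (t + 1) = W t - α • vec (fun j => M t j / Real.sqrt (V t j)))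
    (htW : ∀ t, 1 ≤ t → tW t = W t + (β₁ / (1 - β₁)) • (W t - W (t - 1))) :
    ∀ t, 1 ≤ t →
      F (tW (t + 1)) - F (tW 1) ≤
        -(∑ i ∈ Icc 1 t, ⟪gradient F (tW i),
            (β₁ / (1 - β₁)) • vec (fun j =>
              (α / Real.sqrt (V i j) - α / Real.sqrt (V (i - 1) j)) * M (i - 1) j)⟫)
        + -(∑ i ∈ Icc 1 t, α * ⟪gradient F (tW i),
              vec (fun j => G i j / Real.sqrt (V i j))⟫)
        + (∑ i ∈ Icc 1 t, ρ * ‖(β₁ / (1 - β₁)) • vec (fun j =>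
              (α / Real.sqrt (V i j) - α / Real.sqrt (V (i - 1) j)) * M (i - 1) j)‖ ^ 2)
        + (∑ i ∈ Icc 1 t, ρ * ‖α • vec (fun j => G i j / Real.sqrt (V i j))‖ ^ 2) := by
  have hb : (1 : ℝ) - β₁ ≠ 0 := by linarith
  have hρ0 : 0 ≤ ρ := by
    have h := hLip 0 (EuclideanSpace.single ⟨0, hd⟩ (1 : ℝ))
    have hn : ‖(0 : EuclideanSpace ℝ (Fin d)) - EuclideanSpace.single ⟨0, hd⟩ (1 : ℝ)‖ = 1 := by
      rw [zero_sub, norm_neg, EuclideanSpace.norm_single]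
      simp
    rw [hn, mul_one] at h
    exact le_trans (norm_nonneg _) h
  have hW' : ∀ i : ℕ, W (i + 1) = W i - α • vec (fun j => M i j / Real.sqrt (V i j)) := by
    intro i
    cases i with
    | zero =>
        have : vec (fun j => M 0 j / Real.sqrt (V 0 j)) = 0 := by
          ext j
          rw [vec_apply, hM0]
          simp
        rw [this, smul_zero, sub_zero, hW1]
    | succ n => exact hW n.succ (by omega)
  -- shorthand for the two displacement vectors
  set A : ℕ → EuclideanSpace ℝ (Fin d) := fun i =>
    (β₁ / (1 - β₁)) • vec (fun j =>
      (α / Real.sqrt (V i j) - α / Real.sqrt (V (i - 1) j)) * M (i - 1) j) with hA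
  set B : ℕ → EuclideanSpace ℝ (Fin d) := fun i =>
    α • vec (fun j => G i j / Real.sqrt (V i j)) with hB
  have key : ∀ i, 1 ≤ i → tW (i + 1) - tW i = -(A i) + -(B i) := by
    intro i hi
    have h1 : W (i + 1) - W i = -(α • vec (fun j => M i j / Real.sqrt (V i j))) := by
      rw [hW' i, sub_sub_cancel_left]
    have h2 : W i - W (i - 1) = -(α • vec (fun j => M (i - 1) j / Real.sqrt (V (i - 1) j))) := by
      have h := hW' (i - 1)
      rw [show i - 1 + 1 = i from by omega] at h
      rw [h, sub_sub_cancel_left]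
    rw [htW (i + 1) (by omega), htW i hi, show i + 1 - 1 = i from rfl, hW' i, h2]
    have hMij : ∀ j, M i j = β₁ * M (i - 1) j + (1 - β₁) * G i j := by
      intro j
      have := congrArg (fun v : EuclideanSpace ℝ (Fin d) => v j) (hM i hi)
      simpa using this
    ext j
    have hs : Real.sqrt (V i j) ≠ 0 := ne_of_gt (Real.sqrt_pos.mpr (hV i j))
    have hs' : Real.sqrt (V (i - 1) j) ≠ 0 := ne_of_gt (Real.sqrt_pos.mpr (hV (i - 1) j))
    simp only [hA, hB, PiLp.add_apply, PiLp.sub_apply, PiLp.smul_apply, PiLp.neg_apply,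
      vec_apply, smul_eq_mul, hMij j]
    field_simp
    ring
  have step : ∀ i, 1 ≤ i →
      F (tW (i + 1)) - F (tW i) ≤
        -⟪gradient F (tW i), A i⟫ + -(α * ⟪gradient F (tW i),
          vec (fun j => G i j / Real.sqrt (V i j))⟫) + ρ * ‖A i‖ ^ 2 + ρ * ‖B i‖ ^ 2 := by
    intro i hi
    have hdesc := descent F hF hLip (tW i) (tW (i + 1))
    rw [key i hi] at hdesc
    have hip : ⟪gradient F (tW i), -(A i) + -(B i)⟫ =
        -⟪gradient F (tW i), A i⟫ + -(α * ⟪gradient F (tW i),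
          vec (fun j => G i j / Real.sqrt (V i j))⟫) := by
      have hBi : ⟪gradient F (tW i), B i⟫ = α * ⟪gradient F (tW i),
          vec (fun j => G i j / Real.sqrt (V i j))⟫ :=
        real_inner_smul_right (gradient F (tW i)) (vec (fun j => G i j / Real.sqrt (V i j))) α
      rw [inner_add_right, inner_neg_right, inner_neg_right, hBi]
    have hne : -(A i) + -(B i) = -(A i + B i) := by abel
    rw [hip, hne, norm_neg] at hdesc
    have hsq : ‖A i + B i‖ ^ 2 ≤ (‖A i‖ + ‖B i‖) ^ 2 :=
      pow_le_pow_left₀ (norm_nonneg _) (norm_add_le _ _) 2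
    nlinarith [sq_nonneg (‖A i‖ - ‖B i‖), hdesc, hsq]
  intro t ht
  induction t with
  | zero => omega
  | succ n ih =>
      rcases Nat.lt_or_ge n 1 with hn | hn
      · have hn0 : n = 0 := by omega
        subst hn0
        simpa [hA, hB] using step 1 le_rfl
      · have hsum := ih hn
        have hstep := step (n + 1) (by omega)
        rw [Finset.sum_Icc_succ_top (by omega : 1 ≤ n + 1),
          Finset.sum_Icc_succ_top (by omega : 1 ≤ n + 1),
          Finset.sum_Icc_succ_top (by omega : 1 ≤ n + 1),
          Finset.sum_Icc_succ_top (by omega : 1 ≤ n + 1)]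
        simp only [← hA, ← hB] at *
        linarith
end
end

section
/- Let F : ℝ^d → ℝ be differentiable with ρ-Lipschitz gradient, and suppose ν_min > 0, (V_i)_j ≥ ν_min² for all components j and all i, and ‖G_i‖ ≤ H_F for all i ≥ 1. Then for every t ≥ 1, −∑_{i=2}^t α ⟨∇F(W̃_i) − ∇F(W_i), G_i/√V_i⟩ ≤ (α²/(2ν_min²)) H_F² (t−1) (ρ² β₁²/(1−β₁)² + 1). -/
noncomputable section
open Finset
open scoped RealInnerProductSpace

lemma vec_div_norm_le {d : ℕ} {ν : ℝ} (hν : 0 < ν) (v : Fin d → ℝ)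
    (hv : ∀ j, ν ^ 2 ≤ v j) (x : EuclideanSpace ℝ (Fin d)) :
    ‖vec (fun j => x j / Real.sqrt (v j))‖ ≤ ‖x‖ / ν := by
  rw [le_div_iff₀ hν, mul_comm, EuclideanSpace.norm_eq, EuclideanSpace.norm_eq,
    ← Real.sqrt_sq hν.le, ← Real.sqrt_mul (by positivity)]
  apply Real.sqrt_le_sqrt
  rw [Finset.mul_sum]
  apply Finset.sum_le_sum
  intro j _
  have hvj := hv j
  have hvpos : 0 < v j := lt_of_lt_of_le (by positivity) hvj
  have hs : Real.sqrt (v j) ^ 2 = v j := Real.sq_sqrt hvpos.le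
  simp only [vec_apply, Real.norm_eq_abs, sq_abs]
  rw [div_pow, hs, mul_comm, div_mul_eq_mul_div, div_le_iff₀ hvpos]
  exact mul_le_mul_of_nonneg_left hvj (sq_nonneg _)

/-- If `F` is differentiable with `ρ`-Lipschitz gradient, `ν > 0`,
`(V i)_j ≥ ν²` for all `j, i`, and `‖G i‖ ≤ HF` for all `i ≥ 1`, then for every `t ≥ 1`,
`−∑_{i=2}^t α ⟨∇F(W̃ i) − ∇F(W i), G i/√(V i)⟩ ≤ (α²/(2ν²)) HF² (t−1) (ρ²β₁²/(1−β₁)² + 1)`. -/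
theorem stmt6 {d : ℕ} (hd : 1 ≤ d) (α β₁ ρ ν HF : ℝ) (hα : 0 < α)
    (hβ₁0 : 0 ≤ β₁) (hβ₁1 : β₁ < 1) (hν : 0 < ν)
    (F : EuclideanSpace ℝ (Fin d) → ℝ)
    (hF : Differentiable ℝ F)
    (hLip : ∀ x y, ‖gradient F x - gradient F y‖ ≤ ρ * ‖x - y‖)
    (G M V W tW : ℕ → EuclideanSpace ℝ (Fin d))
    (hV : ∀ i, ∀ j : Fin d, ν ^ 2 ≤ V i j)
    (hM0 : M 0 = 0)
    (hM : ∀ t, 1 ≤ t → M t = β₁ • M (t - 1) + (1 - β₁) • G t)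
    (hW1 : W 1 = W 0)
    (hW : ∀ t, 1 ≤ t → W (t + 1) = W t - α • vec (fun j => M t j / Real.sqrt (V t j)))
    (htW : ∀ t, 1 ≤ t → tW t = W t + (β₁ / (1 - β₁)) • (W t - W (t - 1)))
    (hG : ∀ i, 1 ≤ i → ‖G i‖ ≤ HF) :
    ∀ t, 1 ≤ t →
      -(∑ i ∈ Icc 2 t, α * ⟪gradient F (tW i) - gradient F (W i),
          vec (fun j => G i j / Real.sqrt (V i j))⟫) ≤
        α ^ 2 / (2 * ν ^ 2) * HF ^ 2 * ((t : ℝ) - 1) *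
          (ρ ^ 2 * β₁ ^ 2 / (1 - β₁) ^ 2 + 1) := by
  have hHF : 0 ≤ HF := le_trans (norm_nonneg _) (hG 1 le_rfl)
  have h1β : 0 < 1 - β₁ := by linarith
  have hρ : 0 ≤ ρ := by
    have hy : ‖(EuclideanSpace.single (⟨0, hd⟩ : Fin d) (1:ℝ)) - 0‖ = 1 := by
      simp [EuclideanSpace.norm_single]
    have h := hLip (EuclideanSpace.single (⟨0, hd⟩ : Fin d) (1:ℝ)) 0
    rw [hy, mul_one] at h
    exact le_trans (norm_nonneg _) h
  have hMnorm : ∀ i, ‖M i‖ ≤ HF := by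
    intro i
    induction i with
    | zero => simpa [hM0] using hHF
    | succ n ih =>
      rw [hM (n+1) (Nat.le_add_left 1 n), Nat.add_sub_cancel]
      calc ‖β₁ • M n + (1 - β₁) • G (n+1)‖
          ≤ ‖β₁ • M n‖ + ‖(1 - β₁) • G (n+1)‖ := norm_add_le _ _
        _ = β₁ * ‖M n‖ + (1 - β₁) * ‖G (n+1)‖ := by
            rw [norm_smul, norm_smul, Real.norm_eq_abs, Real.norm_eq_abs,
              abs_of_nonneg hβ₁0, abs_of_nonneg h1β.le]
        _ ≤ β₁ * HF + (1 - β₁) * HF := by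
            have := hG (n+1) (Nat.le_add_left 1 n)
            nlinarith
        _ = HF := by ring
  intro t ht
  obtain ⟨c, hcdef⟩ : ∃ c : ℝ, c = β₁ / (1 - β₁) := ⟨_, rfl⟩
  have hc0 : 0 ≤ c := hcdef ▸ div_nonneg hβ₁0 h1β.le
  obtain ⟨K, hKdef⟩ : ∃ K : ℝ, K = HF / ν := ⟨_, rfl⟩
  have hK0 : 0 ≤ K := hKdef ▸ div_nonneg hHF hν.le
  obtain ⟨C, hCdef⟩ : ∃ C : ℝ,
      C = α ^ 2 / (2 * ν ^ 2) * HF ^ 2 * (ρ ^ 2 * β₁ ^ 2 / (1 - β₁) ^ 2 + 1) := ⟨_, rfl⟩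
  have hCeq : C = α ^ 2 * K ^ 2 / 2 * (ρ ^ 2 * c ^ 2 + 1) := by
    have hν' : ν ≠ 0 := ne_of_gt hν
    have h1β' : (1 - β₁) ≠ 0 := ne_of_gt h1β
    rw [hCdef, hKdef, hcdef, div_pow, div_pow]
    field_simp
  have key : ∀ i ∈ Icc 2 t, -(α * ⟪gradient F (tW i) - gradient F (W i),
      vec (fun j => G i j / Real.sqrt (V i j))⟫) ≤ C := by
    intro i hi
    simp only [mem_Icc] at hi
    have hi1 : 1 ≤ i := by omega
    have hi1' : 1 ≤ i - 1 := by omega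
    have hB : ‖vec (fun j => G i j / Real.sqrt (V i j))‖ ≤ K := by
      refine (vec_div_norm_le hν (V i) (hV i) (G i)).trans ?_
      rw [hKdef]
      exact div_le_div_of_nonneg_right (hG i hi1) hν.le
    have hWdiff : W i - W (i - 1)
        = -(α • vec (fun j => M (i-1) j / Real.sqrt (V (i-1) j))) := by
      have h := hW (i - 1) hi1'
      have hii : i - 1 + 1 = i := by omega
      rw [hii] at h
      rw [h]; abel
    have hWnorm : ‖W i - W (i-1)‖ ≤ α * K := by
      rw [hWdiff, norm_neg, norm_smul, Real.norm_eq_abs, abs_of_pos hα]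
      have h1 := vec_div_norm_le hν (V (i-1)) (hV (i-1)) (M (i-1))
      have h2 : ‖M (i-1)‖ / ν ≤ K := by
        rw [hKdef]; exact div_le_div_of_nonneg_right (hMnorm _) hν.le
      exact mul_le_mul_of_nonneg_left (h1.trans h2) hα.le
    have htWdiff : tW i - W i = c • (W i - W (i-1)) := by
      rw [htW i hi1, hcdef]
      exact add_sub_cancel_left _ _
    have hA : ‖gradient F (tW i) - gradient F (W i)‖ ≤ ρ * (c * (α * K)) := by
      calc ‖gradient F (tW i) - gradient F (W i)‖
          ≤ ρ * ‖tW i - W i‖ := hLip _ _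
        _ = ρ * (c * ‖W i - W (i-1)‖) := by
            rw [htWdiff, norm_smul, Real.norm_eq_abs, abs_of_nonneg hc0]
        _ ≤ ρ * (c * (α * K)) :=
            mul_le_mul_of_nonneg_left (mul_le_mul_of_nonneg_left hWnorm hc0) hρ
    set a := gradient F (tW i) - gradient F (W i)
    set b := vec (fun j => G i j / Real.sqrt (V i j))
    have hip : -(⟪a, b⟫) ≤ ‖a‖ * ‖b‖ := (neg_le_abs _).trans (abs_real_inner_le_norm _ _)
    have hAB : ‖a‖ * ‖b‖ ≤ ρ * (c * (α * K)) * K :=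
      mul_le_mul hA hB (norm_nonneg _) (by positivity)
    have hmain : α * (-(⟪a, b⟫)) ≤ α * (ρ * (c * (α * K)) * K) :=
      mul_le_mul_of_nonneg_left (hip.trans hAB) hα.le
    rw [hCeq]
    nlinarith [hmain, mul_nonneg (mul_nonneg (sq_nonneg α) (sq_nonneg K)) (sq_nonneg (ρ*c - 1))]
  calc -(∑ i ∈ Icc 2 t, α * ⟪gradient F (tW i) - gradient F (W i),
          vec (fun j => G i j / Real.sqrt (V i j))⟫)
      = ∑ i ∈ Icc 2 t, -(α * ⟪gradient F (tW i) - gradient F (W i),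
          vec (fun j => G i j / Real.sqrt (V i j))⟫) := by
        rw [Finset.sum_neg_distrib]
    _ ≤ ∑ i ∈ Icc 2 t, C := Finset.sum_le_sum key
    _ = ((t : ℝ) - 1) * C := by
        rw [Finset.sum_const, Nat.card_Icc, nsmul_eq_mul]
        congr 1
        have : t + 1 - 2 = t - 1 := by omega
        rw [this]
        push_cast [Nat.cast_sub ht]
        ring
    _ = α ^ 2 / (2 * ν ^ 2) * HF ^ 2 * ((t : ℝ) - 1) *
          (ρ ^ 2 * β₁ ^ 2 / (1 - β₁) ^ 2 + 1) := by
        rw [hCdef]; ring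
end
end

section
/- (AdaGrad ℓ1 telescoping bound.) Let (G_i)_{i≥1} be a sequence in ℝ^d with ‖G_i‖_∞ ≤ H_∞ for all i, define V_t = (1/t) ∑_{i=1}^t G_i² componentwise, and suppose (V_t)_j ≥ ν_min² for all components j and all t ≥ 1, where ν_min > 0. Then for every α > 0 and T ≥ 2, ∑_{t=2}^T ‖α/√V_t − α/√V_{t−1}‖₁ ≤ (H_∞² α d / ν_min³) log T. -/
noncomputable section
open Finset

/-- AdaGrad ℓ1 telescoping bound: if `‖G i‖_∞ ≤ Hinf` for all `i ≥ 1`,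
`V t = (1/t) ∑_{i=1}^t (G i)²` componentwise, and `(V t)_j ≥ ν² > 0` for all `j` and `t ≥ 1`,
then for every `α > 0` and `T ≥ 2`,
`∑_{t=2}^T ‖α/√V_t − α/√V_{t−1}‖₁ ≤ (Hinf² α d/ν³) log T`. -/
theorem stmt18 {d : ℕ} (Hinf ν : ℝ) (hν : 0 < ν)
    (G V : ℕ → EuclideanSpace ℝ (Fin d))
    (hGinf : ∀ i, 1 ≤ i → ∀ j : Fin d, |G i j| ≤ Hinf)
    (hV : ∀ t, 1 ≤ t → ∀ j : Fin d, V t j = (1 / (t : ℝ)) * ∑ i ∈ Icc 1 t, (G i j) ^ 2)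
    (hVlow : ∀ t, 1 ≤ t → ∀ j : Fin d, ν ^ 2 ≤ V t j) :
    ∀ (α : ℝ), 0 < α → ∀ T, 2 ≤ T →
      (∑ t ∈ Icc 2 T, ∑ j : Fin d,
          |α / Real.sqrt (V t j) - α / Real.sqrt (V (t - 1) j)|) ≤
        Hinf ^ 2 * α * (d : ℝ) / ν ^ 3 * Real.log (T : ℝ) := by
  intro α hα T hT
  -- telescoping log sum
  have tel : ∀ n : ℕ, 2 ≤ n →
      ∑ t ∈ Icc 2 n, (Real.log (t : ℝ) - Real.log ((t - 1 : ℕ) : ℝ)) = Real.log (n : ℝ) := by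
    intro T hT
    induction T with
    | zero => omega
    | succ n ih =>
      rcases Nat.lt_or_ge n 2 with h | h
      · interval_cases n
        · omega
        · norm_num
      · rw [Finset.sum_Icc_succ_top (by omega), ih h]
        have : n + 1 - 1 = n := by omega
        rw [this]
        ring
  -- per-component key bound
  have key : ∀ t, 2 ≤ t → ∀ j : Fin d,
      |α / Real.sqrt (V t j) - α / Real.sqrt (V (t - 1) j)| ≤
        Hinf ^ 2 * α / ν ^ 3 * (Real.log (t : ℝ) - Real.log ((t - 1 : ℕ) : ℝ)) := by
    intro t ht j
    obtain ⟨s, rfl⟩ : ∃ s, t = s + 2 := ⟨t - 2, by omega⟩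
    have ht1 : s + 2 - 1 = s + 1 := by omega
    rw [ht1]
    have hH : 0 ≤ Hinf := le_trans (abs_nonneg _) (hGinf 1 le_rfl j)
    set a := V (s + 2) j with hadef
    set b := V (s + 1) j with hbdef
    have ha2 : ν ^ 2 ≤ a := hVlow (s + 2) (by omega) j
    have hb2 : ν ^ 2 ≤ b := hVlow (s + 1) (by omega) j
    have ha : 0 < a := lt_of_lt_of_le (by positivity) ha2
    have hb : 0 < b := lt_of_lt_of_le (by positivity) hb2
    have hsa : ν ≤ Real.sqrt a := by
      rw [show ν = Real.sqrt (ν ^ 2) from (Real.sqrt_sq hν.le).symm]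
      exact Real.sqrt_le_sqrt ha2
    have hsb : ν ≤ Real.sqrt b := by
      rw [show ν = Real.sqrt (ν ^ 2) from (Real.sqrt_sq hν.le).symm]
      exact Real.sqrt_le_sqrt hb2
    have hsa0 : 0 < Real.sqrt a := lt_of_lt_of_le hν hsa
    have hsb0 : 0 < Real.sqrt b := lt_of_lt_of_le hν hsb
    set P : ℝ := ∑ i ∈ Icc 1 (s + 1), (G i j) ^ 2 with hPdef
    set q : ℝ := (G (s + 2) j) ^ 2 with hqdef
    have hSsucc : ∑ i ∈ Icc 1 (s + 2), (G i j) ^ 2 = P + q :=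
      Finset.sum_Icc_succ_top (by omega) _
    have n1pos : (0 : ℝ) < (s : ℝ) + 1 := by positivity
    have n2pos : (0 : ℝ) < (s : ℝ) + 2 := by positivity
    have ea : a = (P + q) / ((s : ℝ) + 2) := by
      rw [hadef, hV (s + 2) (by omega) j, hSsucc]
      push_cast
      ring
    have eb : b = P / ((s : ℝ) + 1) := by
      rw [hbdef, hV (s + 1) (by omega) j]
      push_cast
      ring
    have hP0 : 0 ≤ P := Finset.sum_nonneg fun i _ => sq_nonneg _
    have hPle : P ≤ ((s : ℝ) + 1) * Hinf ^ 2 := by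
      have : P ≤ ∑ i ∈ Icc 1 (s + 1), Hinf ^ 2 := by
        apply Finset.sum_le_sum
        intro i hi
        rw [← sq_abs]
        exact pow_le_pow_left₀ (abs_nonneg _) (hGinf i (Finset.mem_Icc.mp hi).1 j) 2
      simpa [Nat.card_Icc, mul_comm] using this
    have hq0 : 0 ≤ q := sq_nonneg _
    have hqle : q ≤ Hinf ^ 2 := by
      rw [hqdef, ← sq_abs]
      exact pow_le_pow_left₀ (abs_nonneg _) (hGinf (s + 2) (by omega) j) 2
    have hab : |a - b| ≤ Hinf ^ 2 / ((s : ℝ) + 2) := by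
      rw [abs_sub_le_iff]
      constructor
      · rw [ea, eb, div_sub_div _ _ n2pos.ne' n1pos.ne',
          div_le_div_iff₀ (by positivity) n2pos]
        nlinarith [mul_le_mul_of_nonneg_right hqle
            (by positivity : (0:ℝ) ≤ ((s:ℝ)+1)*((s:ℝ)+2)),
          mul_nonneg hP0 n2pos.le]
      · rw [ea, eb, div_sub_div _ _ n1pos.ne' n2pos.ne',
          div_le_div_iff₀ (by positivity) n2pos]
        nlinarith [mul_le_mul_of_nonneg_right hPle n2pos.le,
          mul_nonneg (mul_nonneg n1pos.le hq0) n2pos.le]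
    have h1 : Real.sqrt a ^ 2 = a := Real.sq_sqrt ha.le
    have h2 : Real.sqrt b ^ 2 = b := Real.sq_sqrt hb.le
    have hmul : (Real.sqrt b - Real.sqrt a) * (Real.sqrt b + Real.sqrt a) = b - a := by
      linear_combination h2 - h1
    have hbd : |Real.sqrt b - Real.sqrt a| ≤ |b - a| / (2 * ν) := by
      rw [le_div_iff₀ (by positivity)]
      calc |Real.sqrt b - Real.sqrt a| * (2 * ν)
          ≤ |Real.sqrt b - Real.sqrt a| * (Real.sqrt b + Real.sqrt a) :=
            mul_le_mul_of_nonneg_left (by linarith) (abs_nonneg _)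
        _ = |(Real.sqrt b - Real.sqrt a) * (Real.sqrt b + Real.sqrt a)| := by
            rw [abs_mul, abs_of_nonneg (by positivity : (0:ℝ) ≤ Real.sqrt b + Real.sqrt a)]
        _ = |b - a| := by rw [hmul]
    have emain : α / Real.sqrt a - α / Real.sqrt b
        = α * (Real.sqrt b - Real.sqrt a) / (Real.sqrt a * Real.sqrt b) := by
      field_simp
    have hlog : 1 / ((s : ℝ) + 2) ≤ Real.log ((s : ℝ) + 2) - Real.log ((s : ℝ) + 1) := by
      have h := Real.log_le_sub_one_of_pos
        (show (0 : ℝ) < ((s : ℝ) + 1) / ((s : ℝ) + 2) by positivity)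
      rw [Real.log_div n1pos.ne' n2pos.ne'] at h
      have e : ((s : ℝ) + 1) / ((s : ℝ) + 2) - 1 = -(1 / ((s : ℝ) + 2)) := by
        field_simp
        norm_num
      linarith [e ▸ h]
    calc |α / Real.sqrt a - α / Real.sqrt b|
        = α * |Real.sqrt b - Real.sqrt a| / (Real.sqrt a * Real.sqrt b) := by
          rw [emain, abs_div, abs_mul, abs_of_pos hα,
            abs_of_pos (mul_pos hsa0 hsb0)]
      _ ≤ α * (|b - a| / (2 * ν)) / (ν * ν) := by
          apply div_le_div₀ (by positivity)
            (mul_le_mul_of_nonneg_left hbd hα.le) (by positivity)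
            (mul_le_mul hsa hsb hν.le hsa0.le)
      _ ≤ α * (Hinf ^ 2 / ((s : ℝ) + 2) / (2 * ν)) / (ν * ν) := by
          apply div_le_div_of_nonneg_right ?_ (by positivity)
          · apply mul_le_mul_of_nonneg_left ?_ hα.le
            apply div_le_div_of_nonneg_right ?_ (by positivity)
            · rw [abs_sub_comm]; exact hab
      _ = Hinf ^ 2 * α / ν ^ 3 * (1 / (2 * ((s : ℝ) + 2))) := by
          field_simp
      _ ≤ Hinf ^ 2 * α / ν ^ 3 * (Real.log ((s + 2 : ℕ) : ℝ) - Real.log ((s + 1 : ℕ) : ℝ)) := by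
          apply mul_le_mul_of_nonneg_left ?_ (by positivity)
          push_cast
          have h12 : 1 / (2 * ((s : ℝ) + 2)) ≤ 1 / ((s : ℝ) + 2) := by
            apply one_div_le_one_div_of_le n2pos
            linarith
          linarith
  calc (∑ t ∈ Icc 2 T, ∑ j : Fin d,
          |α / Real.sqrt (V t j) - α / Real.sqrt (V (t - 1) j)|)
      ≤ ∑ t ∈ Icc 2 T, ∑ _j : Fin d,
          (Hinf ^ 2 * α / ν ^ 3 * (Real.log (t : ℝ) - Real.log ((t - 1 : ℕ) : ℝ))) :=
        Finset.sum_le_sum fun t ht =>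
          Finset.sum_le_sum fun j _ => key t (Finset.mem_Icc.mp ht).1 j
    _ = (d : ℝ) * (Hinf ^ 2 * α / ν ^ 3) *
          ∑ t ∈ Icc 2 T, (Real.log (t : ℝ) - Real.log ((t - 1 : ℕ) : ℝ)) := by
        rw [Finset.mul_sum]
        apply Finset.sum_congr rfl
        intro t _
        rw [Finset.sum_const, Finset.card_univ, Fintype.card_fin, nsmul_eq_mul]
        ring
    _ = Hinf ^ 2 * α * (d : ℝ) / ν ^ 3 * Real.log (T : ℝ) := by
        rw [tel T hT]
        ring
end
end
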